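/- Let f(x,y) = x·(x³ − y⁵) and g(x,y) = x·(x³ + y⁵), and let φ : ℝ → ℝ be the unique strictly increasing real analytic diffeomorphism with z⁴ − z = φ(z)⁴ + φ(z) for all z. For y ∈ ℝ write y^{5/3} := (y^{1/3})⁵, where y^{1/3} is the real cube root, and define σ : ℝ² → ℝ² by σ(x, y) = ( y^{5/3}·φ(x·y^{−5/3}), y ) for y ≠ 0 and σ(x, 0) = (x, 0). Then σ is a homeomorphism of ℝ² with σ(0,0) = (0,0), there is a neighbourhood of the origin on which both σ and σ⁻¹ are Lipschitz, and f = g ∘ σ. In particular the germs f and g are bi-Lipschitz equivalent. -/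

import Mathlib

/-!
The conjugacy `z⁴ - z = w⁴ + w`, `w = φ z`, factors as `(z + w)((z - w)(z² + w²) - 1) = 0`. As
`z + φ z` is strictly increasing it vanishes at most once, so by continuity
`(z - φ z)(z² + φ z²) = 1` everywhere, and by homogeneity the first coordinate `u` of `σ(x, y)`
satisfies `(x - u)(x² + u²) = y⁵`. Multiplying by `x + u` gives `f = g ∘ σ`, and `σ⁻¹` satisfies
the same relation with `-y⁵`. On `|y| ≤ 1` the relation forces `y⁴ ≤ 2(x² + u²)`, while
`F(x, u) = (x - u)(x² + u²)` decreases in `u` at a rate comparable to `x² + u²`; hence `u` is a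
Lipschitz function of `(x, y)` on the strip `|y| < 1`, which gives both Lipschitz bounds and the
continuity of `σ` and `σ⁻¹` across `y = 0`.
-/

open Filter Topology

noncomputable section

/-- A strictly increasing real analytic diffeomorphism of the real line. -/
def IsAnalyticDiffeo (φ : ℝ → ℝ) : Prop :=
  (∀ x : ℝ, AnalyticAt ℝ φ x) ∧ StrictMono φ ∧ Function.Bijective φ ∧
    ∃ ψ : ℝ → ℝ, (∀ x : ℝ, AnalyticAt ℝ ψ x) ∧
      Function.LeftInverse ψ φ ∧ Function.RightInverse ψ φ

/-- The real cube root. -/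
def cbrt (y : ℝ) : ℝ := if 0 ≤ y then y ^ ((1 : ℝ) / 3) else -((-y) ^ ((1 : ℝ) / 3))

/-- `y^{5/3} := (y^{1/3})⁵` with the real cube root. -/
def pow53 (y : ℝ) : ℝ := (cbrt y) ^ 5

/-- The map `σ(x,y) = (y^{5/3}·φ(x·y^{−5/3}), y)` for `y ≠ 0`, `σ(x,0) = (x,0)`. -/
def sigmaMap (φ : ℝ → ℝ) (p : ℝ × ℝ) : ℝ × ℝ :=
  if p.2 = 0 then (p.1, 0) else (pow53 p.2 * φ (p.1 / pow53 p.2), p.2)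

lemma cbrt_pow_three (y : ℝ) : cbrt y ^ 3 = y := by
  have key : ∀ t : ℝ, 0 ≤ t → (t ^ ((1 : ℝ) / 3)) ^ 3 = t := fun t ht => by
    rw [← Real.rpow_natCast, ← Real.rpow_mul ht]
    norm_num
  unfold cbrt
  split_ifs with h
  · exact key y h
  · linear_combination -key (-y) (by linarith)

lemma continuous_cbrt : Continuous cbrt :=
  Continuous.if_le (Real.continuous_rpow_const (by norm_num))
    ((Real.continuous_rpow_const (q := 1 / 3) (by norm_num)).comp continuous_neg).neg
    continuous_const continuous_id fun y hy => by simp [← hy]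

lemma pow53_pow_three (y : ℝ) : pow53 y ^ 3 = y ^ 5 := by
  rw [pow53, ← pow_mul, mul_comm, pow_mul, cbrt_pow_three]

lemma pow53_ne_zero {y : ℝ} (hy : y ≠ 0) : pow53 y ≠ 0 := fun h =>
  pow_ne_zero 5 hy (by simpa [h] using (pow53_pow_three y).symm)

lemma continuous_pow53 : Continuous pow53 :=
  continuous_cbrt.pow 5

lemma sub_mul_sq_add_sq_eq_one_of_conj {φ : ℝ → ℝ} (hφ : Continuous φ) (hmono : StrictMono φ)
    (hconj : ∀ z : ℝ, z ^ 4 - z = φ z ^ 4 + φ z) (z : ℝ) :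
    (z - φ z) * (z ^ 2 + φ z ^ 2) = 1 := by
  have hzero : {z | φ z + z = 0}.Subsingleton := fun a ha b hb =>
    (hmono.add strictMono_id).injective (ha.trans hb.symm)
  refine congrFun ((by fun_prop : Continuous fun z => (z - φ z) * (z ^ 2 + φ z ^ 2)).ext_on
    (hzero.countable.dense_compl ℝ) continuous_const fun z hz => ?_) z
  have hfactor : (φ z + z) * ((z - φ z) * (z ^ 2 + φ z ^ 2) - 1) = 0 := by
    linear_combination hconj z
  exact sub_eq_zero.1 ((mul_eq_zero.1 hfactor).resolve_left hz)

lemma pow_four_le_of_cubic_eq {x u y : ℝ} (h : (x - u) * (x ^ 2 + u ^ 2) = y ^ 5) (hy : |y| ≤ 1) :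
    y ^ 4 ≤ 2 * (x ^ 2 + u ^ 2) := by
  set s := x ^ 2 + u ^ 2
  have hy2 : y ^ 2 ≤ 1 := (sq_le_one_iff_abs_le_one y).2 hy
  have h10 : y ^ 10 ≤ 2 * s ^ 3 := calc
    y ^ 10 = (x - u) ^ 2 * s ^ 2 := by rw [show y ^ 10 = (y ^ 5) ^ 2 by ring, ← h]; ring
    _ ≤ 2 * s * s ^ 2 := by gcongr; nlinarith [sq_nonneg (x + u)]
    _ = 2 * s ^ 3 := by ring
  refine le_of_pow_le_pow_left₀ three_ne_zero (by positivity) ?_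
  calc (y ^ 4) ^ 3 = y ^ 10 * y ^ 2 := by ring
    _ ≤ 2 * s ^ 3 * 1 := by gcongr
    _ ≤ (2 * s) ^ 3 := by nlinarith [pow_nonneg (by positivity : 0 ≤ s) 3]

lemma abs_pow_five_sub_pow_five_le (a b : ℝ) :
    |a ^ 5 - b ^ 5| ≤ 5 * (a ^ 4 + b ^ 4) * |a - b| := by
  have hmax : max |a| |b| ^ 4 ≤ a ^ 4 + b ^ 4 := by
    have ha : 0 ≤ a ^ 4 := by positivity
    have hb : 0 ≤ b ^ 4 := by positivity
    rcases le_total |a| |b| with h | h <;>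
      simp only [max_eq_left, max_eq_right, h, Even.pow_abs (by decide : Even 4)] <;> linarith
  calc |a ^ 5 - b ^ 5| ≤ |a - b| * 5 * max |a| |b| ^ 4 := by
        simpa using abs_pow_sub_pow_le a b 5
    _ ≤ 5 * (a ^ 4 + b ^ 4) * |a - b| := by nlinarith [abs_nonneg (a - b)]

-- `S / 2` and `-Q / 2` are symmetric difference quotients of `F(x, u) = (x - u)(x² + u²)` in `x`
-- and in `u`; the coercivity `Q ≥ R / 2` is what makes the implicit solution `u` Lipschitz.
lemma abs_sub_le_of_cubic_eq {x₁ u₁ y₁ x₂ u₂ y₂ : ℝ}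
    (h₁ : (x₁ - u₁) * (x₁ ^ 2 + u₁ ^ 2) = y₁ ^ 5) (h₂ : (x₂ - u₂) * (x₂ ^ 2 + u₂ ^ 2) = y₂ ^ 5)
    (hy₁ : |y₁| ≤ 1) (hy₂ : |y₂| ≤ 1) :
    |u₁ - u₂| ≤ 8 * |x₁ - x₂| + 40 * |y₁ - y₂| := by
  set R := x₁ ^ 2 + x₂ ^ 2 + u₁ ^ 2 + u₂ ^ 2
  set Q := x₁ ^ 2 + x₂ ^ 2 - (x₁ + x₂) * (u₁ + u₂) + 2 * (u₁ ^ 2 + u₁ * u₂ + u₂ ^ 2)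
  set S := 2 * (x₁ ^ 2 + x₁ * x₂ + x₂ ^ 2) - (u₁ + u₂) * (x₁ + x₂) + u₁ ^ 2 + u₂ ^ 2
  have hR : 0 ≤ R := by positivity
  have hQ : R / 2 ≤ Q := by
    nlinarith [sq_nonneg (x₁ - x₂), sq_nonneg (u₁ - u₂), sq_nonneg (u₁ + u₂),
      sq_nonneg (x₁ + x₂ - 2 * u₁ - 2 * u₂)]
  have hS : |S| ≤ 4 * R := by
    rw [abs_le]
    constructor
    · nlinarith [sq_nonneg (u₁ + u₂ + x₁ + x₂), sq_nonneg (x₁ - x₂), sq_nonneg (u₁ - u₂)]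
    · nlinarith [sq_nonneg (u₁ + u₂ - x₁ - x₂), sq_nonneg (x₁ - x₂), sq_nonneg (u₁ - u₂)]
  have hy : |y₁ ^ 5 - y₂ ^ 5| ≤ 10 * R * |y₁ - y₂| := by
    have := pow_four_le_of_cubic_eq h₁ hy₁
    have := pow_four_le_of_cubic_eq h₂ hy₂
    nlinarith [abs_pow_five_sub_pow_five_le y₁ y₂, abs_nonneg (y₁ - y₂)]
  have hdiff : Q * (u₁ - u₂) = S * (x₁ - x₂) - 2 * (y₁ ^ 5 - y₂ ^ 5) := by
    linear_combination -2 * h₁ + 2 * h₂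
  have hmain : R * (|u₁ - u₂| / 2) ≤ R * (4 * |x₁ - x₂| + 20 * |y₁ - y₂|) := calc
    R * (|u₁ - u₂| / 2) ≤ Q * |u₁ - u₂| := by nlinarith [abs_nonneg (u₁ - u₂)]
    _ = |S * (x₁ - x₂) - 2 * (y₁ ^ 5 - y₂ ^ 5)| := by
      rw [← hdiff, abs_mul, abs_of_nonneg (show 0 ≤ Q by linarith)]
    _ ≤ |S * (x₁ - x₂)| + |2 * (y₁ ^ 5 - y₂ ^ 5)| := abs_sub _ _
    _ = |S| * |x₁ - x₂| + 2 * |y₁ ^ 5 - y₂ ^ 5| := by rw [abs_mul, abs_mul, abs_two]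
    _ ≤ 4 * R * |x₁ - x₂| + 2 * (10 * R * |y₁ - y₂|) := by gcongr
    _ = R * (4 * |x₁ - x₂| + 20 * |y₁ - y₂|) := by ring
  rcases hR.eq_or_lt with hR0 | hRpos
  · have hu : u₁ - u₂ = 0 := by nlinarith [sq_nonneg (u₁ + u₂), sq_nonneg x₁, sq_nonneg x₂]
    rw [hu, abs_zero]
    positivity
  · linarith [le_of_mul_le_mul_left hmain hRpos]

lemma isOpen_setOf_abs_snd_lt (r : ℝ) : IsOpen {p : ℝ × ℝ | |p.2| < r} :=
  isOpen_lt continuous_snd.abs continuous_const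

lemma lipschitzOnWith_of_cubic {T : ℝ × ℝ → ℝ × ℝ} {ε : ℝ} (hε : |ε| = 1)
    (hT₂ : ∀ p, (T p).2 = p.2)
    (hT : ∀ p, (p.1 - (T p).1) * (p.1 ^ 2 + (T p).1 ^ 2) = ε * p.2 ^ 5) :
    LipschitzOnWith 48 T {p | |p.2| < 1} := by
  have hε4 : ε ^ 4 = 1 := by rw [← Even.pow_abs (by decide), hε, one_pow]
  have hT' : ∀ p, (p.1 - (T p).1) * (p.1 ^ 2 + (T p).1 ^ 2) = (ε * p.2) ^ 5 := fun p => by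
    rw [hT]; linear_combination -ε * p.2 ^ 5 * hε4
  have hεy : ∀ y : ℝ, |y| < 1 → |ε * y| ≤ 1 := fun y hy => by
    rw [abs_mul, hε, one_mul]; exact hy.le
  refine LipschitzOnWith.of_dist_le_mul fun p hp q hq => ?_
  have hu := abs_sub_le_of_cubic_eq (hT' p) (hT' q) (hεy _ hp) (hεy _ hq)
  rw [← mul_sub, abs_mul, hε, one_mul] at hu
  simp only [Prod.dist_eq, Real.dist_eq, hT₂, NNReal.coe_ofNat]
  have hx := le_max_left |p.1 - q.1| |p.2 - q.2|
  have hy := le_max_right |p.1 - q.1| |p.2 - q.2|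
  exact max_le (by linarith) (by linarith [abs_nonneg (p.2 - q.2)])

section sigmaMap

variable (χ : ℝ → ℝ)

@[simp]
lemma sigmaMap_snd (p : ℝ × ℝ) : (sigmaMap χ p).2 = p.2 := by
  unfold sigmaMap
  split_ifs with h <;> simp [h]

@[simp]
lemma sigmaMap_zero : sigmaMap χ 0 = 0 := by
  simp [sigmaMap]

variable {χ}

lemma sigmaMap_leftInverse {η : ℝ → ℝ} (h : Function.LeftInverse η χ) :
    Function.LeftInverse (sigmaMap η) (sigmaMap χ) := by
  intro p
  by_cases hy : p.2 = 0
  · simp [sigmaMap, hy, Prod.ext_iff]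
  · simp [sigmaMap, hy, pow53_ne_zero hy, h _, mul_div_cancel₀]

lemma sigmaMap_cubic {c : ℝ} (hχ : ∀ z, (z - χ z) * (z ^ 2 + χ z ^ 2) = c) (p : ℝ × ℝ) :
    (p.1 - (sigmaMap χ p).1) * (p.1 ^ 2 + (sigmaMap χ p).1 ^ 2) = c * p.2 ^ 5 := by
  unfold sigmaMap
  split_ifs with hy
  · simp [hy]
  · rw [← pow53_pow_three]
    set t := pow53 p.2
    set z := p.1 / t
    have hx : p.1 = t * z := (mul_div_cancel₀ _ (pow53_ne_zero hy)).symm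
    rw [hx]
    linear_combination t ^ 3 * hχ z

lemma continuousAt_sigmaMap (hχ : Continuous χ) {p : ℝ × ℝ} (hp : p.2 ≠ 0) :
    ContinuousAt (sigmaMap χ) p := by
  have hev : sigmaMap χ =ᶠ[𝓝 p] fun q => (pow53 q.2 * χ (q.1 / pow53 q.2), q.2) := by
    filter_upwards [(isOpen_ne.preimage continuous_snd).mem_nhds hp] with q hq
    exact if_neg hq
  refine ContinuousAt.congr ?_ hev.symm
  have hpow : Continuous fun q : ℝ × ℝ => pow53 q.2 := continuous_pow53.comp continuous_snd
  exact (hpow.continuousAt.mul (hχ.continuousAt.comp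
    (continuousAt_fst.div hpow.continuousAt (pow53_ne_zero hp)))).prodMk continuousAt_snd

lemma continuous_sigmaMap (hχ : Continuous χ) {ε : ℝ} (hε : |ε| = 1)
    (hrel : ∀ p, (p.1 - (sigmaMap χ p).1) * (p.1 ^ 2 + (sigmaMap χ p).1 ^ 2) = ε * p.2 ^ 5) :
    Continuous (sigmaMap χ) := by
  refine continuous_iff_continuousAt.2 fun p => ?_
  rcases eq_or_ne p.2 0 with hp | hp
  · exact (lipschitzOnWith_of_cubic hε (sigmaMap_snd χ) hrel).continuousOn.continuousAt
      ((isOpen_setOf_abs_snd_lt 1).mem_nhds (by simp [hp]))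
  · exact continuousAt_sigmaMap hχ hp

end sigmaMap

/-- The map `σ` built from the analytic diffeomorphism `φ` conjugating `z⁴ − z` to `z⁴ + z`
is a homeomorphism of `ℝ²` fixing the origin, bi-Lipschitz near the origin, and conjugates
`f(x,y) = x(x³−y⁵)` to `g(x,y) = x(x³+y⁵)`; hence `f` and `g` are bi-Lipschitz equivalent. -/
theorem stmt17 (φ : ℝ → ℝ) (hφ : IsAnalyticDiffeo φ)
    (hconj : ∀ z : ℝ, z ^ 4 - z = (φ z) ^ 4 + φ z)
    (f g : ℝ × ℝ → ℝ)
    (hf : ∀ p : ℝ × ℝ, f p = p.1 * (p.1 ^ 3 - p.2 ^ 5))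
    (hg : ∀ p : ℝ × ℝ, g p = p.1 * (p.1 ^ 3 + p.2 ^ 5)) :
    ∃ h : ℝ × ℝ ≃ₜ ℝ × ℝ, ⇑h = sigmaMap φ ∧ h 0 = 0 ∧
      (∃ (U V : Set (ℝ × ℝ)) (K K' : NNReal), IsOpen U ∧ (0 : ℝ × ℝ) ∈ U ∧
        IsOpen V ∧ (0 : ℝ × ℝ) ∈ V ∧
        LipschitzOnWith K (sigmaMap φ) U ∧ LipschitzOnWith K' (⇑h.symm) V) ∧
      ∀ p : ℝ × ℝ, f p = g (sigmaMap φ p) := by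
  obtain ⟨hφan, hmono, -, ψ, hψan, hl, hr⟩ := hφ
  have hφc : Continuous φ := continuous_iff_continuousAt.2 fun x => (hφan x).continuousAt
  have hψc : Continuous ψ := continuous_iff_continuousAt.2 fun x => (hψan x).continuousAt
  have hφrel := sigmaMap_cubic (sub_mul_sq_add_sq_eq_one_of_conj hφc hmono hconj)
  have hψrel (p : ℝ × ℝ) :
      (p.1 - (sigmaMap ψ p).1) * (p.1 ^ 2 + (sigmaMap ψ p).1 ^ 2) = -1 * p.2 ^ 5 := by
    have := hφrel (sigmaMap ψ p)
    rw [sigmaMap_leftInverse hr p, sigmaMap_snd] at this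
    linear_combination -this
  let h : ℝ × ℝ ≃ₜ ℝ × ℝ :=
    { toFun := sigmaMap φ
      invFun := sigmaMap ψ
      left_inv := sigmaMap_leftInverse hl
      right_inv := sigmaMap_leftInverse hr
      continuous_toFun := continuous_sigmaMap hφc abs_one hφrel
      continuous_invFun := continuous_sigmaMap hψc (by simp) hψrel }
  refine ⟨h, rfl, sigmaMap_zero φ, ⟨_, _, 48, 48, isOpen_setOf_abs_snd_lt 1, by simp,
    isOpen_setOf_abs_snd_lt 1, by simp, lipschitzOnWith_of_cubic abs_one (sigmaMap_snd φ) hφrel,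
    lipschitzOnWith_of_cubic (by simp) (sigmaMap_snd ψ) hψrel⟩, fun p => ?_⟩
  rw [hf, hg, sigmaMap_snd]
  linear_combination (p.1 + (sigmaMap φ p).1) * hφrel p
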